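/- arXiv:1111.0324 — 10 statements merged into one kernel-verified Lean document; each statement's English description precedes it below -/
import Mathlib

section
/- Let $\lambda_1, \lambda_2 \ge 0$ and $n_1, n_2 > 0$, and let $S_1, S_2$ be real numbers. Then the following two conditions are equivalent: (A) $|n_1 S_1| \le \lambda_1 + \lambda_2$, $|n_2 S_2| \le \lambda_1 + \lambda_2$, and $|n_1 S_1 + n_2 S_2| \le 2\lambda_1$; (B) there exist $\Gamma_1, \Gamma_2, \Upsilon \in [-1,1]$ such that $-n_1 S_1 - \lambda_1 \Gamma_1 - \lambda_2 \Upsilon = 0$ and $-n_2 S_2 - \lambda_1 \Gamma_2 + \lambda_2 \Upsilon = 0$. -/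
/-- Lemma 1 (fused graphical lasso screening): equivalence of condition (A)
on the scaled covariances and condition (B), the existence of subgradients. -/
theorem stmt_0 (lam1 lam2 n1 n2 S1 S2 : ℝ)
    (hlam1 : 0 ≤ lam1) (hlam2 : 0 ≤ lam2) (hn1 : 0 < n1) (hn2 : 0 < n2) :
    (|n1 * S1| ≤ lam1 + lam2 ∧ |n2 * S2| ≤ lam1 + lam2 ∧
      |n1 * S1 + n2 * S2| ≤ 2 * lam1) ↔
    (∃ Γ1 Γ2 Υ : ℝ, Γ1 ∈ Set.Icc (-1 : ℝ) 1 ∧ Γ2 ∈ Set.Icc (-1 : ℝ) 1 ∧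
      Υ ∈ Set.Icc (-1 : ℝ) 1 ∧
      -(n1 * S1) - lam1 * Γ1 - lam2 * Υ = 0 ∧
      -(n2 * S2) - lam1 * Γ2 + lam2 * Υ = 0) := by
  set a := n1 * S1 with ha
  set b := n2 * S2 with hb
  constructor
  · rintro ⟨h1, h2, h3⟩
    rw [abs_le] at h1 h2 h3
    obtain ⟨h1l, h1r⟩ := h1
    obtain ⟨h2l, h2r⟩ := h2
    obtain ⟨h3l, h3r⟩ := h3
    set t := max (-lam2) (max (-lam1 - a) (b - lam1)) with htdef
    have ht1 : -lam2 ≤ t := le_max_left _ _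
    have ht2 : t ≤ lam2 := by
      apply max_le (by linarith)
      apply max_le <;> linarith
    have ht3 : -lam1 - a ≤ t := le_trans (le_max_left _ _) (le_max_right _ _)
    have ht4 : t ≤ lam1 - a := by
      apply max_le (by linarith)
      apply max_le <;> linarith
    have ht5 : t ≤ b + lam1 := by
      apply max_le (by linarith)
      apply max_le <;> linarith
    have ht6 : b - lam1 ≤ t := le_trans (le_max_right _ _) (le_max_right _ _)
    refine ⟨if lam1 = 0 then 0 else -(a + t) / lam1,
      if lam1 = 0 then 0 else (t - b) / lam1,
      if lam2 = 0 then 0 else t / lam2, ?_, ?_, ?_, ?_, ?_⟩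
    · by_cases h : lam1 = 0
      · simp [h]
      · have hl : 0 < lam1 := lt_of_le_of_ne hlam1 (Ne.symm h)
        simp only [h, if_false, Set.mem_Icc]
        rw [le_div_iff₀ hl, div_le_iff₀ hl]
        constructor <;> linarith
    · by_cases h : lam1 = 0
      · simp [h]
      · have hl : 0 < lam1 := lt_of_le_of_ne hlam1 (Ne.symm h)
        simp only [h, if_false, Set.mem_Icc]
        rw [le_div_iff₀ hl, div_le_iff₀ hl]
        constructor <;> linarith
    · by_cases h : lam2 = 0
      · simp [h]
      · have hl : 0 < lam2 := lt_of_le_of_ne hlam2 (Ne.symm h)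
        simp only [h, if_false, Set.mem_Icc]
        rw [le_div_iff₀ hl, div_le_iff₀ hl]
        constructor <;> linarith
    · by_cases h : lam1 = 0 <;> by_cases h' : lam2 = 0 <;>
        simp only [h, h', if_true, if_false] <;>
        [skip; skip; skip; skip]
      · subst h; subst h'; simp at ht1 ht2 ht3 ht4 ⊢; linarith
      · subst h
        have hl : lam2 ≠ 0 := h'
        rw [mul_div_cancel₀ _ hl]
        simp at ht3 ht4; linarith
      · subst h'
        have hl : lam1 ≠ 0 := h
        rw [mul_comm, div_mul_cancel₀ _ hl]
        have : t = 0 := le_antisymm ht2 (by linarith)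
        linarith
      · rw [mul_comm lam1, div_mul_cancel₀ _ h, mul_div_cancel₀ _ h']
        ring
    · by_cases h : lam1 = 0 <;> by_cases h' : lam2 = 0 <;>
        simp only [h, h', if_true, if_false]
      · subst h; subst h'; simp at ht1 ht2 ht5 ht6 ⊢; linarith
      · subst h
        rw [mul_div_cancel₀ _ h']
        simp at ht5 ht6; linarith
      · subst h'
        rw [mul_comm, div_mul_cancel₀ _ h]
        have : t = 0 := le_antisymm ht2 (by linarith)
        linarith
      · rw [mul_comm lam1, div_mul_cancel₀ _ h, mul_div_cancel₀ _ h']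
        ring
  · rintro ⟨G1, G2, U, ⟨hG1l, hG1r⟩, ⟨hG2l, hG2r⟩, ⟨hUl, hUr⟩, e1, e2⟩
    have hG1 : lam1 * G1 ≤ lam1 ∧ -lam1 ≤ lam1 * G1 :=
      ⟨by nlinarith, by nlinarith⟩
    have hG2 : lam1 * G2 ≤ lam1 ∧ -lam1 ≤ lam1 * G2 :=
      ⟨by nlinarith, by nlinarith⟩
    have hU : lam2 * U ≤ lam2 ∧ -lam2 ≤ lam2 * U :=
      ⟨by nlinarith, by nlinarith⟩
    refine ⟨abs_le.mpr ⟨?_, ?_⟩, abs_le.mpr ⟨?_, ?_⟩, abs_le.mpr ⟨?_, ?_⟩⟩ <;>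
      linarith [hG1.1, hG1.2, hG2.1, hG2.2, hU.1, hU.2]
end

section
/- Let $K \ge 1$, $\lambda_1 \ge 0$, $\lambda_2 > 0$, $n_k > 0$ and $S_k \in \mathbb{R}$ for $k = 1, \dots, K$. The following are equivalent: (A) there exist scalars $a_1, \dots, a_K$ with $\sum_{k=1}^K a_k^2 \le 1$ and $n_k |S_k| \le \lambda_1 + \lambda_2 a_k$ for all $k$; (B) there exist scalars $\Gamma_1, \dots, \Gamma_K \in [-1,1]$ and $\Upsilon_1, \dots, \Upsilon_K$ with $\sum_{k=1}^K \Upsilon_k^2 \le 1$ such that $n_k S_k + \lambda_1 \Gamma_k + \lambda_2 \Upsilon_k = 0$ for all $k$. -/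
open Finset

lemma abs_sign_le_one' (x : ℝ) : |Real.sign x| ≤ 1 := by
  rcases Real.sign_apply_eq x with h | h | h <;> rw [h] <;> norm_num

lemma sign_mul_abs' (x : ℝ) : Real.sign x * |x| = x := by
  rcases lt_trichotomy x 0 with h | h | h
  · rw [Real.sign_of_neg h, abs_of_neg h]; ring
  · simp [h]
  · rw [Real.sign_of_pos h, abs_of_pos h]; ring

/-- Lemma 2 (group graphical lasso screening): equivalence of conditions (A) and (B). -/
theorem stmt_1 (K : ℕ) (hK : 1 ≤ K) (lam1 lam2 : ℝ)
    (hlam1 : 0 ≤ lam1) (hlam2 : 0 < lam2)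
    (n S : Fin K → ℝ) (hn : ∀ k, 0 < n k) :
    (∃ a : Fin K → ℝ, ∑ k, (a k) ^ 2 ≤ 1 ∧
      ∀ k, n k * |S k| ≤ lam1 + lam2 * a k) ↔
    (∃ Γ Υ : Fin K → ℝ, (∀ k, Γ k ∈ Set.Icc (-1 : ℝ) 1) ∧
      ∑ k, (Υ k) ^ 2 ≤ 1 ∧
      ∀ k, n k * S k + lam1 * Γ k + lam2 * Υ k = 0) := by
  constructor
  · rintro ⟨a, hsum, hineq⟩
    set t : Fin K → ℝ := fun k => max (n k * |S k| - lam1) 0 with ht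
    refine ⟨fun k => if lam1 = 0 then 0 else
        -Real.sign (S k) * (min (n k * |S k|) lam1 / lam1),
      fun k => -Real.sign (S k) * (t k / lam2), ?_, ?_, ?_⟩
    · intro k
      by_cases h : lam1 = 0
      · simp [h]
      · have hl : 0 < lam1 := lt_of_le_of_ne hlam1 (Ne.symm h)
        have hm0 : 0 ≤ min (n k * |S k|) lam1 :=
          le_min (mul_nonneg (hn k).le (abs_nonneg _)) hlam1
        have hm1 : min (n k * |S k|) lam1 / lam1 ≤ 1 := by
          rw [div_le_one hl]; exact min_le_right _ _
        have hs := abs_sign_le_one' (S k)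
        have habs : |(-Real.sign (S k) * (min (n k * |S k|) lam1 / lam1))| ≤ 1 := by
          rw [abs_mul, abs_neg]
          calc |Real.sign (S k)| * |min (n k * |S k|) lam1 / lam1|
              ≤ 1 * 1 := by
                apply mul_le_mul hs _ (abs_nonneg _) zero_le_one
                rw [abs_of_nonneg (by positivity)]; exact hm1
            _ = 1 := by ring
        simp only [if_neg h, Set.mem_Icc]
        constructor <;> [linarith [neg_abs_le (-Real.sign (S k) * (min (n k * |S k|) lam1 / lam1))];
          linarith [le_abs_self (-Real.sign (S k) * (min (n k * |S k|) lam1 / lam1))]]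
    · calc ∑ k, (-Real.sign (S k) * (t k / lam2)) ^ 2
          ≤ ∑ k, (a k) ^ 2 := by
            apply Finset.sum_le_sum
            intro k _
            have hs := abs_sign_le_one' (S k)
            have ht0 : 0 ≤ t k := le_max_right _ _
            have htle : t k / lam2 ≤ |a k| := by
              rw [div_le_iff₀ hlam2]
              have h1 : n k * |S k| - lam1 ≤ lam2 * a k := by
                linarith [hineq k]
              have h2 : lam2 * a k ≤ |a k| * lam2 := by
                rw [mul_comm]
                exact mul_le_mul_of_nonneg_right (le_abs_self _) hlam2.le
              have h3 : (0:ℝ) ≤ |a k| * lam2 := by positivity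
              exact max_le (by linarith) h3
            have h4 : (t k / lam2) ^ 2 ≤ (a k) ^ 2 := by
              have := pow_le_pow_left₀ (by positivity) htle 2
              rwa [sq_abs] at this
            have hs2 : (Real.sign (S k)) ^ 2 ≤ 1 := by
              nlinarith [sq_abs (Real.sign (S k)), abs_nonneg (Real.sign (S k))]
            nlinarith [sq_nonneg (t k / lam2)]
        _ ≤ 1 := hsum
    · intro k
      have hkey : min (n k * |S k|) lam1 + t k = n k * |S k| := by
        rcases le_total (n k * |S k|) lam1 with h | h
        · rw [min_eq_left h, ht]
          simp only
          rw [max_eq_right (by linarith)]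
          ring
        · rw [min_eq_right h, ht]
          simp only
          rw [max_eq_left (by linarith)]
          ring
      have hsgn : Real.sign (S k) * (n k * |S k|) = n k * S k := by
        rw [show Real.sign (S k) * (n k * |S k|) = n k * (Real.sign (S k) * |S k|) by ring,
          sign_mul_abs']
      have hυ : lam2 * (-Real.sign (S k) * (t k / lam2)) = -(Real.sign (S k) * t k) := by
        field_simp
      by_cases h : lam1 = 0
      · simp only [if_pos h, mul_zero]
        have htt : t k = n k * |S k| := by
          rw [ht]; simp only [h, sub_zero]
          exact max_eq_left (mul_nonneg (hn k).le (abs_nonneg _))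
        rw [hυ, htt]
        linear_combination -hsgn
      · simp only [if_neg h]
        have hγ : lam1 * (-Real.sign (S k) * (min (n k * |S k|) lam1 / lam1)) =
            -(Real.sign (S k) * min (n k * |S k|) lam1) := by
          field_simp
        rw [hυ, hγ]
        linear_combination -hsgn - Real.sign (S k) * hkey
  · rintro ⟨Γ, Υ, hΓ, hsum, heq⟩
    refine ⟨fun k => |Υ k|, by simpa [sq_abs] using hsum, ?_⟩
    intro k
    have h1 := heq k
    have h2 := (hΓ k).1
    have h3 := (hΓ k).2
    have h4 : n k * |S k| = |n k * S k| := by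
      rw [abs_mul, abs_of_pos (hn k)]
    rw [h4]
    have h5 : n k * S k = -(lam1 * Γ k + lam2 * Υ k) := by linarith
    rw [h5, abs_neg]
    calc |lam1 * Γ k + lam2 * Υ k| ≤ |lam1 * Γ k| + |lam2 * Υ k| := abs_add_le _ _
      _ ≤ lam1 + lam2 * |Υ k| := by
          rw [abs_mul, abs_mul, abs_of_nonneg hlam1, abs_of_pos hlam2]
          have : |Γ k| ≤ 1 := abs_le.mpr ⟨h2, h3⟩
          nlinarith
end

section
/- Let $\lambda_1 \ge 0$, $\lambda_2 > 0$, $n_k > 0$ and $S_k \in \mathbb{R}$ for $k = 1, \dots, K$. Then the condition $\sum_{k=1}^K \big((n_k |S_k| - \lambda_1)_+\big)^2 \le \lambda_2^2$ holds if and only if there exist scalars $a_1, \dots, a_K$ with $\sum_{k=1}^K a_k^2 \le 1$ and $n_k |S_k| \le \lambda_1 + \lambda_2 a_k$ for all $k$, where $(x)_+ = \max(x, 0)$. -/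
open Finset

/-- The screening condition of Theorem 3 is equivalent to condition (A) of Lemma 2. -/
theorem stmt_2 (K : ℕ) (lam1 lam2 : ℝ)
    (hlam1 : 0 ≤ lam1) (hlam2 : 0 < lam2)
    (n S : Fin K → ℝ) (hn : ∀ k, 0 < n k) :
    (∑ k, (max (n k * |S k| - lam1) 0) ^ 2 ≤ lam2 ^ 2) ↔
    (∃ a : Fin K → ℝ, ∑ k, (a k) ^ 2 ≤ 1 ∧
      ∀ k, n k * |S k| ≤ lam1 + lam2 * a k) := by
  constructor
  · intro h
    refine ⟨fun k => max (n k * |S k| - lam1) 0 / lam2, ?_, ?_⟩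
    · have : ∑ k, (max (n k * |S k| - lam1) 0 / lam2) ^ 2
          = (∑ k, (max (n k * |S k| - lam1) 0) ^ 2) / lam2 ^ 2 := by
        rw [Finset.sum_div]
        simp [div_pow]
      rw [this, div_le_one (by positivity)]
      exact h
    · intro k
      have : lam2 * (max (n k * |S k| - lam1) 0 / lam2)
          = max (n k * |S k| - lam1) 0 := by
        field_simp
      rw [this]
      have := le_max_left (n k * |S k| - lam1) 0
      linarith
  · rintro ⟨a, ha, hk⟩
    calc ∑ k, (max (n k * |S k| - lam1) 0) ^ 2
        ≤ ∑ k, lam2 ^ 2 * (a k) ^ 2 := by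
          apply Finset.sum_le_sum
          intro k _
          have h1 : max (n k * |S k| - lam1) 0 ≤ lam2 * |a k| := by
            apply max_le
            · have := hk k
              have : lam2 * a k ≤ lam2 * |a k| :=
                mul_le_mul_of_nonneg_left (le_abs_self _) hlam2.le
              linarith [hk k]
            · positivity
          have h2 : (max (n k * |S k| - lam1) 0) ^ 2 ≤ (lam2 * |a k|) ^ 2 := by
            apply pow_le_pow_left₀ (le_max_right _ _) h1
          calc (max (n k * |S k| - lam1) 0) ^ 2 ≤ (lam2 * |a k|) ^ 2 := h2
            _ = lam2 ^ 2 * (a k) ^ 2 := by rw [mul_pow, sq_abs]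
      _ = lam2 ^ 2 * ∑ k, (a k) ^ 2 := by rw [Finset.mul_sum]
      _ ≤ lam2 ^ 2 * 1 := by
          apply mul_le_mul_of_nonneg_left ha (by positivity)
      _ = lam2 ^ 2 := mul_one _
end

section
/- Fix $\rho > 0$, $\lambda_1 \ge 0$, $\lambda_2 \ge 0$, $K \ge 1$, and $a = (a_1, \dots, a_K) \in \mathbb{R}^K$. Define $s_k = S(a_k, \lambda_1/\rho) = \operatorname{sgn}(a_k)(|a_k| - \lambda_1/\rho)_+$. Then the unique minimizer over $z \in \mathbb{R}^K$ of $h(z) = \frac{\rho}{2}\sum_{k=1}^K (z_k - a_k)^2 + \lambda_1 \sum_{k=1}^K |z_k| + \lambda_2 \sqrt{\sum_{k=1}^K z_k^2}$ is given componentwise by $\hat z_k = s_k \Big(1 - \frac{\lambda_2}{\rho \sqrt{\sum_{j=1}^K s_j^2}}\Big)_+$ when $(s_1,\dots,s_K) \ne 0$, and $\hat z = 0$ otherwise. -/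
/-!
The objective is `ρ`-strongly convex, so `ẑ` is its unique minimizer as soon as
`ρ (a - ẑ)` is a subgradient of the penalty `λ₁ ‖z‖₁ + λ₂ ‖z‖₂` at `ẑ`; then
`h ẑ + ρ/2 ‖z - ẑ‖² ≤ h z` for every `z`. Writing `ẑ = c s` with
`c = (1 - λ₂ / (ρ ‖s‖))₊ ∈ [0, 1]`, split `ρ (a - ẑ) = ρ (a - s) + ρ (1 - c) s`.
The first summand is `λ₁` times a subgradient of `‖·‖₁` at `s`, hence also at its
nonnegative multiple `ẑ`, by the defining property of soft thresholding; the second is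
`λ₂` times a subgradient of `‖·‖₂` at `ẑ`, by the choice of `c`.
-/

open Finset

theorem softThreshold_subgradient {x t y : ℝ} (ht : 0 ≤ t)
    (hy : y = Real.sign x * max (|x| - t) 0) :
    |x - y| ≤ t ∧ (x - y) * y = t * |y| := by
  rcases le_or_gt (|x| - t) 0 with hle | hgt
  · rw [max_eq_right hle, mul_zero] at hy
    subst hy
    simpa using hle
  · rw [max_eq_left hgt.le] at hy
    rcases lt_trichotomy x 0 with hneg | hzero | hpos
    · rw [Real.sign_of_neg hneg, abs_of_neg hneg] at hy
      have hx : x - y = -t := by rw [hy]; ring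
      rw [hx, abs_neg, abs_of_nonneg ht, abs_of_neg (by linarith [abs_of_neg hneg])]
      exact ⟨le_rfl, by ring⟩
    · subst hzero
      linarith [abs_zero (α := ℝ)]
    · rw [Real.sign_of_pos hpos, abs_of_pos hpos] at hy
      have hx : x - y = t := by rw [hy]; ring
      rw [hx, abs_of_nonneg ht, abs_of_pos (by linarith [abs_of_pos hpos])]
      exact ⟨le_rfl, rfl⟩

theorem blockFactor_le_one {ρ lam n c : ℝ} (hρ : 0 < ρ) (hlam : 0 ≤ lam) (hn : 0 ≤ n)
    (hc : c = max (1 - lam / (ρ * n)) 0) : c ≤ 1 := by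
  rw [hc]
  exact max_le (sub_le_self _ (by positivity)) zero_le_one

theorem mul_one_sub_blockFactor_mul_le {ρ lam n c : ℝ} (hρ : 0 < ρ) (hlam : 0 ≤ lam)
    (hn : 0 ≤ n) (hc : c = max (1 - lam / (ρ * n)) 0) : ρ * (1 - c) * n ≤ lam := by
  rcases hn.eq_or_lt with rfl | hn
  · simpa using hlam
  rw [hc]
  rcases le_or_gt (1 - lam / (ρ * n)) 0 with hle | hgt
  · rw [max_eq_right hle]
    have := (one_le_div (by positivity : 0 < ρ * n)).mp (by linarith : 1 ≤ lam / (ρ * n))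
    linarith
  · rw [max_eq_left hgt.le]
    exact le_of_eq (by field_simp; ring)

theorem mul_one_sub_blockFactor_mul_sq {ρ lam n c : ℝ} (hρ : 0 < ρ) (hn : 0 ≤ n)
    (hc : c = max (1 - lam / (ρ * n)) 0) : ρ * (1 - c) * c * n ^ 2 = lam * (c * n) := by
  rcases hn.eq_or_lt with rfl | hn
  · ring
  rw [hc]
  rcases le_or_gt (1 - lam / (ρ * n)) 0 with hle | hgt
  · rw [max_eq_right hle]; ring
  · rw [max_eq_left hgt.le]; field_simp; ring

section Subgradient

variable {ι : Type*} [Fintype ι]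

theorem sum_mul_le_mul_sum_abs {g : ι → ℝ} {lam : ℝ} (hg : ∀ k, |g k| ≤ lam) (z : ι → ℝ) :
    ∑ k, g k * z k ≤ lam * ∑ k, |z k| := by
  rw [mul_sum]
  refine sum_le_sum fun k _ => ?_
  calc g k * z k ≤ |g k| * |z k| := by rw [← abs_mul]; exact le_abs_self _
    _ ≤ lam * |z k| := mul_le_mul_of_nonneg_right (hg k) (abs_nonneg _)

theorem sum_mul_mul_const_eq_mul_sum_abs {g s : ι → ℝ} {lam c : ℝ}
    (hgs : ∀ k, g k * s k = lam * |s k|) (hc : 0 ≤ c) :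
    ∑ k, g k * (s k * c) = lam * ∑ k, |s k * c| := by
  rw [mul_sum]
  refine sum_congr rfl fun k _ => ?_
  rw [abs_mul, abs_of_nonneg hc, ← mul_assoc, hgs, mul_assoc]

theorem sum_const_mul_mul_le_mul_sqrt {s : ι → ℝ} {μ lam : ℝ} (hμ : 0 ≤ μ)
    (hle : μ * √(∑ k, s k ^ 2) ≤ lam) (z : ι → ℝ) :
    ∑ k, μ * s k * z k ≤ lam * √(∑ k, z k ^ 2) := by
  calc ∑ k, μ * s k * z k = μ * ∑ k, s k * z k := by
        rw [mul_sum]; exact sum_congr rfl fun k _ => mul_assoc _ _ _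
    _ ≤ μ * (√(∑ k, s k ^ 2) * √(∑ k, z k ^ 2)) :=
        mul_le_mul_of_nonneg_left (Real.sum_mul_le_sqrt_mul_sqrt _ _ _) hμ
    _ ≤ lam * √(∑ k, z k ^ 2) := by
        rw [← mul_assoc]; exact mul_le_mul_of_nonneg_right hle (Real.sqrt_nonneg _)

theorem sum_const_mul_mul_mul_const_eq_mul_sqrt {s : ι → ℝ} {μ lam c : ℝ} (hc : 0 ≤ c)
    (heq : μ * c * √(∑ k, s k ^ 2) ^ 2 = lam * (c * √(∑ k, s k ^ 2))) :
    ∑ k, μ * s k * (s k * c) = lam * √(∑ k, (s k * c) ^ 2) := by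
  have hsq : ∑ k, (s k * c) ^ 2 = (c * √(∑ k, s k ^ 2)) ^ 2 := by
    rw [mul_pow, Real.sq_sqrt (sum_nonneg fun k _ => sq_nonneg _), mul_sum]
    exact sum_congr rfl fun k _ => by ring
  rw [hsq, Real.sqrt_sq (mul_nonneg hc (Real.sqrt_nonneg _)), ← heq,
    Real.sq_sqrt (sum_nonneg fun k _ => sq_nonneg _), mul_sum]
  exact sum_congr rfl fun k _ => by ring

/-- Three-point identity for the quadratic term plus the subgradient inequality. -/
theorem add_sum_sq_le_of_subgradient {P : (ι → ℝ) → ℝ} {ρ : ℝ} {a w : ι → ℝ}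
    (hle : ∀ z, ∑ k, ρ * (a k - w k) * z k ≤ P z)
    (heq : ∑ k, ρ * (a k - w k) * w k = P w) (z : ι → ℝ) :
    ρ / 2 * ∑ k, (w k - a k) ^ 2 + P w + ρ / 2 * ∑ k, (z k - w k) ^ 2 ≤
      ρ / 2 * ∑ k, (z k - a k) ^ 2 + P z := by
  have expand : ρ / 2 * ∑ k, (z k - a k) ^ 2 = ρ / 2 * ∑ k, (w k - a k) ^ 2 +
      ρ / 2 * ∑ k, (z k - w k) ^ 2 + ∑ k, ρ * (a k - w k) * w k -
        ∑ k, ρ * (a k - w k) * z k := by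
    simp only [mul_sum, ← sum_add_distrib, ← sum_sub_distrib]
    exact sum_congr rfl fun k _ => by ring
  linarith [hle z]

theorem le_and_eq_of_add_sum_sq_le {f : (ι → ℝ) → ℝ} {ρ : ℝ} (hρ : 0 < ρ)
    {w : ι → ℝ} (hf : ∀ z, f w + ρ / 2 * ∑ k, (z k - w k) ^ 2 ≤ f z) :
    (∀ z, f w ≤ f z) ∧ (∀ z, f z = f w → z = w) := by
  have hsum : ∀ z : ι → ℝ, 0 ≤ ∑ k, (z k - w k) ^ 2 := fun z => sum_nonneg fun k _ => sq_nonneg _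
  refine ⟨fun z => by nlinarith [hf z, hsum z], fun z hz => ?_⟩
  have hzero : ∑ k, (z k - w k) ^ 2 = 0 := by nlinarith [hf z, hsum z]
  funext k
  have := (sum_eq_zero_iff_of_nonneg fun k _ => sq_nonneg (z k - w k)).mp hzero k (mem_univ k)
  exact sub_eq_zero.mp (pow_eq_zero_iff two_ne_zero |>.mp this)

end Subgradient

theorem stmt_6_general (ρ lam1 lam2 : ℝ) (hρ : 0 < ρ) (hlam1 : 0 ≤ lam1)
    (hlam2 : 0 ≤ lam2) (K : ℕ) (a : Fin K → ℝ)
    (s : Fin K → ℝ)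
    (hs : ∀ k, s k = Real.sign (a k) * max (|a k| - lam1 / ρ) 0)
    (h : (Fin K → ℝ) → ℝ)
    (hh : ∀ z, h z = ρ / 2 * ∑ k, (z k - a k) ^ 2 +
      lam1 * ∑ k, |z k| + lam2 * Real.sqrt (∑ k, (z k) ^ 2)) :
    (s ≠ 0 →
      (∀ z, h (fun k => s k *
          max (1 - lam2 / (ρ * Real.sqrt (∑ j, (s j) ^ 2))) 0) ≤ h z) ∧
      (∀ z, h z = h (fun k => s k *
          max (1 - lam2 / (ρ * Real.sqrt (∑ j, (s j) ^ 2))) 0) →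
        z = fun k => s k *
          max (1 - lam2 / (ρ * Real.sqrt (∑ j, (s j) ^ 2))) 0)) ∧
    (s = 0 → (∀ z, h 0 ≤ h z) ∧ (∀ z, h z = h 0 → z = 0)) := by
  set n := √(∑ j, s j ^ 2)
  set c := max (1 - lam2 / (ρ * n)) 0 with hc
  have hn0 : 0 ≤ n := Real.sqrt_nonneg _
  have hc0 : 0 ≤ c := le_max_right _ _
  have hsoft k := softThreshold_subgradient (div_nonneg hlam1 hρ.le) (hs k)
  have hl1 k : |ρ * (a k - s k)| ≤ lam1 := by
    rw [abs_mul, abs_of_pos hρ]; exact (le_div_iff₀' hρ).mp (hsoft k).1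
  have hl1_eq k : ρ * (a k - s k) * s k = lam1 * |s k| := by
    rw [mul_assoc, (hsoft k).2]; field_simp
  have hμ : 0 ≤ ρ * (1 - c) := mul_nonneg hρ.le (by linarith [blockFactor_le_one hρ hlam2 hn0 hc])
  have hsplit (z : Fin K → ℝ) : ∑ k, ρ * (a k - s k * c) * z k =
      ∑ k, ρ * (a k - s k) * z k + ∑ k, ρ * (1 - c) * s k * z k := by
    rw [← sum_add_distrib]; exact sum_congr rfl fun k _ => by ring
  have key (z : Fin K → ℝ) : h (fun k => s k * c) + ρ / 2 * ∑ k, (z k - s k * c) ^ 2 ≤ h z := by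
    have := add_sum_sq_le_of_subgradient
      (P := fun z => lam1 * ∑ k, |z k| + lam2 * √(∑ k, z k ^ 2)) (a := a)
      (fun z => by
        rw [hsplit]
        exact add_le_add (sum_mul_le_mul_sum_abs hl1 z) (sum_const_mul_mul_le_mul_sqrt hμ
          (mul_one_sub_blockFactor_mul_le hρ hlam2 hn0 hc) z))
      (by
        rw [hsplit, sum_mul_mul_const_eq_mul_sum_abs hl1_eq hc0,
          sum_const_mul_mul_mul_const_eq_mul_sqrt hc0 (mul_one_sub_blockFactor_mul_sq hρ hn0 hc)])
      z
    rw [hh, hh]; linarith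
  have hmin := le_and_eq_of_add_sum_sq_le hρ key
  refine ⟨fun _ => hmin, fun hs0 => ?_⟩
  have hzero : (fun k => s k * c) = 0 := by funext k; simp [hs0]
  rwa [hzero] at hmin

/-- Sparse group lasso proximal update (equation 14 of the paper):
the unique minimizer is soft-thresholding followed by block soft-thresholding. -/
theorem stmt_6 (ρ lam1 lam2 : ℝ) (hρ : 0 < ρ) (hlam1 : 0 ≤ lam1)
    (hlam2 : 0 ≤ lam2) (K : ℕ) (hK : 1 ≤ K) (a : Fin K → ℝ)
    (s : Fin K → ℝ)
    (hs : ∀ k, s k = Real.sign (a k) * max (|a k| - lam1 / ρ) 0)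
    (h : (Fin K → ℝ) → ℝ)
    (hh : ∀ z, h z = ρ / 2 * ∑ k, (z k - a k) ^ 2 +
      lam1 * ∑ k, |z k| + lam2 * Real.sqrt (∑ k, (z k) ^ 2)) :
    (s ≠ 0 →
      (∀ z, h (fun k => s k *
          max (1 - lam2 / (ρ * Real.sqrt (∑ j, (s j) ^ 2))) 0) ≤ h z) ∧
      (∀ z, h z = h (fun k => s k *
          max (1 - lam2 / (ρ * Real.sqrt (∑ j, (s j) ^ 2))) 0) →
        z = fun k => s k *
          max (1 - lam2 / (ρ * Real.sqrt (∑ j, (s j) ^ 2))) 0)) ∧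
    (s = 0 → (∀ z, h 0 ≤ h z) ∧ (∀ z, h z = h 0 → z = 0)) :=
  stmt_6_general ρ lam1 lam2 hρ hlam1 hlam2 K a s hs h hh
end

section
/- Let $n > 0$, $\rho > 0$, let $S$, $B$ be symmetric $p \times p$ real matrices, and let $S - \rho B / n$ have eigendecomposition $V D V^T$ with $V$ orthogonal and $D$ diagonal. Define $\tilde D$ to be the diagonal matrix with entries $\tilde D_{jj} = \frac{n}{2\rho}\big(-D_{jj} + \sqrt{D_{jj}^2 + 4\rho/n}\big)$. Then $\Theta^* = V \tilde D V^T$ is positive definite and satisfies the first-order optimality condition $n(\Theta^{*-1} - S) - \rho(\Theta^* - B) = 0$ of the problem: minimize over positive definite $\Theta$ the function $-n(\log\det\Theta - \operatorname{trace}(S\Theta)) + \frac{\rho}{2}\|\Theta - B\|_F^2$. -/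
/-!
Conjugating by the orthogonal `V` reduces everything to the eigenvalues: each `Θ̃_jj` is the
positive root `t` of `ρ t² + n D_jj t - n = 0`, i.e. of the scalar equation
`n / t - ρ t = n D_jj`, and the matrix equation `n Θ⁻¹ - ρ Θ = n S - ρ B = n V D Vᵀ` is this
scalar equation on each eigenvalue.
-/

open Matrix

lemma neg_add_sqrt_sq_add_pos (d : ℝ) {c : ℝ} (hc : 0 < c) : 0 < -d + √(d ^ 2 + c) := by
  have : d < √(d ^ 2 + c) := Real.lt_sqrt_of_sq_lt (by linarith)
  linarith

noncomputable def thetaUpdateRoot (n ρ d : ℝ) : ℝ :=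
  n / (2 * ρ) * (-d + √(d ^ 2 + 4 * ρ / n))

section thetaUpdateRoot

variable {n ρ : ℝ} (hn : 0 < n) (hρ : 0 < ρ) (d : ℝ)
include hn hρ

lemma thetaUpdateRoot_pos : 0 < thetaUpdateRoot n ρ d :=
  mul_pos (by positivity) (neg_add_sqrt_sq_add_pos d (by positivity))

lemma mul_inv_thetaUpdateRoot_sub :
    n * (thetaUpdateRoot n ρ d)⁻¹ - ρ * thetaUpdateRoot n ρ d = n * d := by
  have hsd := (neg_add_sqrt_sq_add_pos d (c := 4 * ρ / n) (by positivity)).ne'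
  have hs : √(d ^ 2 + 4 * ρ / n) ^ 2 = d ^ 2 + 4 * ρ / n := Real.sq_sqrt (by positivity)
  unfold thetaUpdateRoot
  generalize √(d ^ 2 + 4 * ρ / n) = s at hsd hs ⊢
  have hs' : n * s ^ 2 = n * d ^ 2 + 4 * ρ := by rw [hs]; field_simp
  field_simp
  linear_combination -hs'

end thetaUpdateRoot

lemma Matrix.PosDef.mul_mul_transpose_of_mul_transpose_eq_one {ι : Type*} [Fintype ι]
    [DecidableEq ι] {A V : Matrix ι ι ℝ} (hA : A.PosDef) (hV : V * Vᵀ = 1) :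
    (V * A * Vᵀ).PosDef := by
  have hinj : Function.Injective V.vecMul := fun x y h => by
    simpa [vecMul_vecMul, hV] using congrArg (· ᵥ* Vᵀ) h
  simpa using hA.mul_mul_conjTranspose_same hinj

lemma Matrix.inv_mul_mul_transpose_of_mul_transpose_eq_one {ι R : Type*} [Fintype ι]
    [DecidableEq ι] [CommRing R] {V : Matrix ι ι R} (hV : V * Vᵀ = 1) (A : Matrix ι ι R) :
    (V * A * Vᵀ)⁻¹ = V * A⁻¹ * Vᵀ := by
  rw [mul_inv_rev, mul_inv_rev, inv_eq_right_inv hV, inv_eq_left_inv hV, Matrix.mul_assoc]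

theorem stmt_8_general (p : ℕ) (n ρ : ℝ) (hn : 0 < n) (hρ : 0 < ρ)
    (S B V D : Matrix (Fin p) (Fin p) ℝ)
    (hV : V * Vᵀ = 1 ∧ Vᵀ * V = 1) (hD : D.IsDiag)
    (hdecomp : S - (ρ / n) • B = V * D * Vᵀ)
    (Θ : Matrix (Fin p) (Fin p) ℝ)
    (hΘ : Θ = V * Matrix.diagonal
      (fun j => n / (2 * ρ) * (-(D j j) + Real.sqrt ((D j j) ^ 2 + 4 * ρ / n))) * Vᵀ) :
    Θ.PosDef ∧ n • (Θ⁻¹ - S) - ρ • (Θ - B) = 0 := by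
  set t : Fin p → ℝ := fun j => thetaUpdateRoot n ρ (D j j)
  have ht : ∀ j, 0 < t j := fun j => thetaUpdateRoot_pos hn hρ _
  replace hΘ : Θ = V * diagonal t * Vᵀ := hΘ
  have hΘinv : Θ⁻¹ = V * diagonal t⁻¹ * Vᵀ := by
    have hdiag_inv : (diagonal t)⁻¹ = diagonal t⁻¹ :=
      inv_eq_right_inv (by simp [diagonal_mul_diagonal, fun j => (ht j).ne'])
    rw [hΘ, inv_mul_mul_transpose_of_mul_transpose_eq_one hV.1, hdiag_inv]
  have hSB : n • S - ρ • B = V * (n • D) * Vᵀ := by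
    rw [← mul_div_cancel₀ ρ hn.ne', ← smul_smul, ← smul_sub, hdecomp, Matrix.mul_smul,
      Matrix.smul_mul]
  have hdiag : n • diagonal t⁻¹ - ρ • diagonal t = n • D := by
    rw [← hD.diagonal_diag, ← diagonal_smul, ← diagonal_smul, ← diagonal_smul, diagonal_sub]
    exact congrArg diagonal (funext fun j => mul_inv_thetaUpdateRoot_sub hn hρ (D j j))
  refine ⟨hΘ ▸ (posDef_diagonal_iff.2 ht).mul_mul_transpose_of_mul_transpose_eq_one hV.1, ?_⟩
  calc n • (Θ⁻¹ - S) - ρ • (Θ - B) = (n • Θ⁻¹ - ρ • Θ) - (n • S - ρ • B) := by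
        simp only [smul_sub]; abel
    _ = V * (n • diagonal t⁻¹ - ρ • diagonal t) * Vᵀ - V * (n • D) * Vᵀ := by
        rw [hΘinv, hΘ, hSB]
        simp only [Matrix.mul_sub, Matrix.sub_mul, Matrix.mul_smul, Matrix.smul_mul]
    _ = 0 := by rw [hdiag, sub_self]

/-- The matrix Theta-update of the ADMM algorithm: the eigenvalue-wise update
produces a positive definite matrix satisfying the first-order optimality
condition. -/
theorem stmt_8 (p : ℕ) (n ρ : ℝ) (hn : 0 < n) (hρ : 0 < ρ)
    (S B V D : Matrix (Fin p) (Fin p) ℝ)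
    (hS : S.IsSymm) (hB : B.IsSymm)
    (hV : V * Vᵀ = 1 ∧ Vᵀ * V = 1) (hD : D.IsDiag)
    (hdecomp : S - (ρ / n) • B = V * D * Vᵀ)
    (Θ : Matrix (Fin p) (Fin p) ℝ)
    (hΘ : Θ = V * Matrix.diagonal
      (fun j => n / (2 * ρ) * (-(D j j) + Real.sqrt ((D j j) ^ 2 + 4 * ρ / n))) * Vᵀ) :
    Θ.PosDef ∧ n • (Θ⁻¹ - S) - ρ • (Θ - B) = 0 :=
  stmt_8_general p n ρ hn hρ S B V D hV hD hdecomp Θ hΘ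
end

section
/- Let $\rho > 0$, $\lambda_1 \ge 0$, $\lambda_2 \ge 0$, and $A_1, A_2 \in \mathbb{R}$. Let $(\tilde z_1, \tilde z_2)$ be the minimizer of $\frac{\rho}{2}\sum_{k=1}^2 (z_k - A_k)^2 + \lambda_2|z_1 - z_2|$. Then $\big(S(\tilde z_1, \lambda_1/\rho), S(\tilde z_2, \lambda_1/\rho)\big)$ minimizes $\frac{\rho}{2}\sum_{k=1}^2 (z_k - A_k)^2 + \lambda_1(|z_1| + |z_2|) + \lambda_2|z_1 - z_2|$ over $(z_1, z_2) \in \mathbb{R}^2$, where $S(x, c) = \operatorname{sgn}(x)(|x| - c)_+$. -/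
/-!
The fusion-only minimizer `zt` satisfies the first-order conditions `zt1 + zt2 = A1 + A2` and
`ρ (A1 - zt1) ∈ ∂(λ₂ |·|)(zt1 - zt2)`. Soft-thresholding `s_k = S(zt_k, λ₁/ρ)` is the proximal step
of `λ₁ |·|`, so `ρ (zt_k - s_k) ∈ ∂(λ₁ |·|)(s_k)`. Since `S` is monotone, `s1 - s2` is a nonnegative
multiple of `zt1 - zt2`, and the fusion subgradient remains a subgradient at `s1 - s2`. Thus `s`
satisfies the first-order conditions of the full (convex) objective and is a global minimizer.
-/

open Set Filter Topology

def HasSubgradientAt (f : ℝ → ℝ) (u x : ℝ) : Prop :=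
  ∀ y, f x + u * (y - x) ≤ f y

theorem HasSubgradientAt.const_mul {f : ℝ → ℝ} {u x a : ℝ} (h : HasSubgradientAt f u x)
    (ha : 0 ≤ a) : HasSubgradientAt (fun y => a * f y) (a * u) x := fun y => by
  have := mul_le_mul_of_nonneg_left (h y) ha
  linarith

theorem HasSubgradientAt.of_convexOn {f : ℝ → ℝ} {u x C : ℝ} (hf : ConvexOn ℝ univ f)
    (h : ∀ τ, u * τ - C * τ ^ 2 ≤ f (x + τ) - f x) : HasSubgradientAt f u x := by
  intro y
  obtain ⟨τ, rfl⟩ : ∃ τ, y = x + τ := ⟨y - x, by ring⟩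
  -- Convexity on the segment from `x` to `x + τ` shrinks the quadratic error by the factor `t`.
  have hseg : ∀ t ∈ Ioc (0 : ℝ) 1, u * τ - C * t * τ ^ 2 ≤ f (x + τ) - f x := by
    rintro t ⟨ht0, ht1⟩
    have hconv : f (x + t * τ) ≤ (1 - t) * f x + t * f (x + τ) := by
      have := hf.2 (mem_univ x) (mem_univ (x + τ)) (sub_nonneg.2 ht1) ht0.le (by ring)
      simp only [smul_eq_mul] at this
      rwa [show (1 - t) * x + t * (x + τ) = x + t * τ by ring] at this
    have hquad := h (t * τ)
    have : t * (u * τ - C * t * τ ^ 2) ≤ t * (f (x + τ) - f x) := by nlinarith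
    exact le_of_mul_le_mul_left this ht0
  have hlim : Tendsto (fun t => u * τ - C * t * τ ^ 2) (𝓝[>] 0) (𝓝 (u * τ)) := by
    have : Continuous fun t : ℝ => u * τ - C * t * τ ^ 2 := by fun_prop
    simpa using (this.tendsto 0).mono_left nhdsWithin_le_nhds
  have := le_of_tendsto hlim (eventually_of_mem (Ioc_mem_nhdsGT one_pos) hseg)
  rw [add_sub_cancel_left]
  linarith

theorem hasSubgradientAt_mul_abs_iff {c u t : ℝ} (hc : 0 ≤ c) :
    HasSubgradientAt (fun w => c * |w|) u t ↔ |u| ≤ c ∧ u * t = c * |t| := by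
  constructor
  · intro h
    have hut : u * t = c * |t| := by
      have h0 := h 0
      have h2 := h (2 * t)
      simp only [abs_mul, abs_two, abs_zero, mul_zero] at h0 h2
      linarith
    have hle (w : ℝ) : u * w ≤ c * |w| := by
      have hy := h (t + w)
      have htri := mul_le_mul_of_nonneg_left (abs_add_le t w) hc
      simp only [add_sub_cancel_left] at hy
      linarith
    have h1 := hle 1
    have h1' := hle (-1)
    simp only [abs_one, abs_neg] at h1 h1'
    exact ⟨abs_le.2 ⟨by linarith, by linarith⟩, hut⟩
  · rintro ⟨hu, hut⟩ w
    have : u * w ≤ c * |w| := (le_abs_self _).trans <| by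
      rw [abs_mul]
      exact mul_le_mul_of_nonneg_right hu (abs_nonneg w)
    linarith

theorem HasSubgradientAt.mul_abs_of_nonneg {c u t κ : ℝ} (hc : 0 ≤ c)
    (h : HasSubgradientAt (fun w => c * |w|) u t) (hκ : 0 ≤ κ) :
    HasSubgradientAt (fun w => c * |w|) u (κ * t) := by
  obtain ⟨hu, hut⟩ := (hasSubgradientAt_mul_abs_iff hc).1 h
  refine (hasSubgradientAt_mul_abs_iff hc).2 ⟨hu, ?_⟩
  rw [abs_mul, abs_of_nonneg hκ]
  linear_combination κ * hut

noncomputable def softThreshold (x c : ℝ) : ℝ :=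
  Real.sign x * max (|x| - c) 0

theorem softThreshold_eq_max_add_min {c : ℝ} (hc : 0 ≤ c) (x : ℝ) :
    softThreshold x c = max (x - c) 0 + min (x + c) 0 := by
  unfold softThreshold
  rcases lt_trichotomy x 0 with hx | rfl | hx
  · rw [Real.sign_of_neg hx, abs_of_neg hx]
    simp only [max_def, min_def]
    split_ifs <;> linarith
  · simp [hc]
  · rw [Real.sign_of_pos hx, abs_of_pos hx]
    simp only [max_def, min_def]
    split_ifs <;> linarith

theorem softThreshold_monotone {c : ℝ} (hc : 0 ≤ c) : Monotone (softThreshold · c) := by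
  intro a b hab
  simp only [softThreshold_eq_max_add_min hc]
  gcongr

theorem exists_softThreshold_sub_eq_mul {c : ℝ} (hc : 0 ≤ c) (a b : ℝ) :
    ∃ κ, 0 ≤ κ ∧ softThreshold a c - softThreshold b c = κ * (a - b) := by
  rcases lt_trichotomy a b with hab | rfl | hab
  · refine ⟨(softThreshold a c - softThreshold b c) / (a - b), ?_, ?_⟩
    · exact div_nonneg_of_nonpos (sub_nonpos.2 (softThreshold_monotone hc hab.le)) (by linarith)
    · field_simp [sub_ne_zero.2 hab.ne]
  · exact ⟨0, le_rfl, by simp⟩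
  · refine ⟨(softThreshold a c - softThreshold b c) / (a - b), ?_, ?_⟩
    · exact div_nonneg (sub_nonneg.2 (softThreshold_monotone hc hab.le)) (by linarith)
    · field_simp [sub_ne_zero.2 hab.ne']

theorem hasSubgradientAt_softThreshold {c : ℝ} (hc : 0 ≤ c) (x : ℝ) :
    HasSubgradientAt (fun w => c * |w|) (x - softThreshold x c) (softThreshold x c) := by
  rw [hasSubgradientAt_mul_abs_iff hc, softThreshold_eq_max_add_min hc, abs_le]
  rcases le_total x (-c) with h | h
  · rw [max_eq_right (by linarith), min_eq_left (by linarith), abs_of_nonpos (by linarith)]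
    refine ⟨⟨?_, ?_⟩, ?_⟩ <;> linarith
  rcases le_total x c with h' | h'
  · rw [max_eq_right (by linarith), min_eq_right (by linarith), add_zero, abs_zero]
    refine ⟨⟨?_, ?_⟩, ?_⟩ <;> linarith
  · rw [max_eq_left (by linarith), min_eq_right (by linarith), abs_of_nonneg (by linarith)]
    refine ⟨⟨?_, ?_⟩, ?_⟩ <;> linarith

namespace FusedLasso

variable {ρ lam1 lam2 A1 A2 : ℝ}

def IsFusionMinimizer (ρ lam2 A1 A2 zt1 zt2 : ℝ) : Prop :=
  ∀ z1 z2 : ℝ, ρ / 2 * ((zt1 - A1) ^ 2 + (zt2 - A2) ^ 2) + lam2 * |zt1 - zt2| ≤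
    ρ / 2 * ((z1 - A1) ^ 2 + (z2 - A2) ^ 2) + lam2 * |z1 - z2|

noncomputable def objective (ρ lam1 lam2 A1 A2 z1 z2 : ℝ) : ℝ :=
  ρ / 2 * ((z1 - A1) ^ 2 + (z2 - A2) ^ 2) + lam1 * (|z1| + |z2|) + lam2 * |z1 - z2|

theorem IsFusionMinimizer.add_eq {zt1 zt2 : ℝ} (hzt : IsFusionMinimizer ρ lam2 A1 A2 zt1 zt2)
    (hρ : 0 < ρ) : zt1 + zt2 = A1 + A2 := by
  set m := zt1 + zt2 - (A1 + A2)
  have h := hzt (zt1 - m / 2) (zt2 - m / 2)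
  simp only [sub_sub_sub_cancel_right] at h
  have : ρ * m ^ 2 ≤ 0 := by linarith
  have : m = 0 :=
    pow_eq_zero_iff two_ne_zero |>.1 <|
      le_antisymm (nonpos_of_mul_nonpos_right this hρ) (sq_nonneg m)
  linarith

theorem IsFusionMinimizer.hasSubgradientAt {zt1 zt2 : ℝ}
    (hzt : IsFusionMinimizer ρ lam2 A1 A2 zt1 zt2) (hlam2 : 0 ≤ lam2) :
    HasSubgradientAt (fun w => lam2 * |w|) (ρ * (A1 - zt1)) (zt1 - zt2) := by
  refine .of_convexOn (C := ρ / 2) ((convexOn_norm convex_univ).smul hlam2) fun τ => ?_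
  have h := hzt (zt1 + τ) zt2
  simp only [add_sub_right_comm zt1 τ zt2] at h
  linarith

theorem objective_le_of_stationary {s1 s2 v1 v2 u : ℝ} (hρ : 0 ≤ ρ)
    (h1 : HasSubgradientAt (fun w => lam1 * |w|) v1 s1)
    (h2 : HasSubgradientAt (fun w => lam1 * |w|) v2 s2)
    (h12 : HasSubgradientAt (fun w => lam2 * |w|) u (s1 - s2))
    (hs1 : ρ * (s1 - A1) + v1 + u = 0) (hs2 : ρ * (s2 - A2) + v2 - u = 0) (z1 z2 : ℝ) :
    objective ρ lam1 lam2 A1 A2 s1 s2 ≤ objective ρ lam1 lam2 A1 A2 z1 z2 := by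
  have hq1 : 0 ≤ ρ / 2 * (z1 - s1) ^ 2 := by positivity
  have hq2 : 0 ≤ ρ / 2 * (z2 - s2) ^ 2 := by positivity
  unfold objective
  linear_combination h1 z1 + h2 z2 + h12 (z1 - z2) + hq1 + hq2 - (z1 - s1) * hs1 - (z2 - s2) * hs2

end FusedLasso

open FusedLasso in
/-- The two-class fused lasso signal approximator with both penalties is solved
by soft-thresholding the fusion-only minimizer. -/
theorem stmt_9 (ρ lam1 lam2 A1 A2 : ℝ) (hρ : 0 < ρ) (hlam1 : 0 ≤ lam1)
    (hlam2 : 0 ≤ lam2) (zt1 zt2 : ℝ)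
    (hzt : ∀ z1 z2 : ℝ,
      ρ / 2 * ((zt1 - A1) ^ 2 + (zt2 - A2) ^ 2) + lam2 * |zt1 - zt2| ≤
      ρ / 2 * ((z1 - A1) ^ 2 + (z2 - A2) ^ 2) + lam2 * |z1 - z2|) :
    ∀ z1 z2 : ℝ,
      ρ / 2 * ((Real.sign zt1 * max (|zt1| - lam1 / ρ) 0 - A1) ^ 2 +
        (Real.sign zt2 * max (|zt2| - lam1 / ρ) 0 - A2) ^ 2) +
      lam1 * (|Real.sign zt1 * max (|zt1| - lam1 / ρ) 0| +
        |Real.sign zt2 * max (|zt2| - lam1 / ρ) 0|) +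
      lam2 * |Real.sign zt1 * max (|zt1| - lam1 / ρ) 0 -
        Real.sign zt2 * max (|zt2| - lam1 / ρ) 0| ≤
      ρ / 2 * ((z1 - A1) ^ 2 + (z2 - A2) ^ 2) +
      lam1 * (|z1| + |z2|) + lam2 * |z1 - z2| := by
  have hc : 0 ≤ lam1 / ρ := div_nonneg hlam1 hρ.le
  have hsoft (x : ℝ) : HasSubgradientAt (fun w => lam1 * |w|)
      (ρ * (x - softThreshold x (lam1 / ρ))) (softThreshold x (lam1 / ρ)) := by
    simpa only [← mul_assoc, mul_div_cancel₀ _ hρ.ne'] using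
      (hasSubgradientAt_softThreshold hc x).const_mul hρ.le
  obtain ⟨κ, hκ, hdiff⟩ := exists_softThreshold_sub_eq_mul hc zt1 zt2
  have hfuse := (IsFusionMinimizer.hasSubgradientAt hzt hlam2).mul_abs_of_nonneg hlam2 hκ
  rw [← hdiff] at hfuse
  have hsum := IsFusionMinimizer.add_eq hzt hρ
  show ∀ z1 z2, objective ρ lam1 lam2 A1 A2 (softThreshold zt1 (lam1 / ρ))
    (softThreshold zt2 (lam1 / ρ)) ≤ objective ρ lam1 lam2 A1 A2 z1 z2
  exact objective_le_of_stationary hρ.le (hsoft zt1) (hsoft zt2) hfuse (by ring)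
    (by linear_combination ρ * hsum)
end

section
/- Let $K \ge 2$, $\lambda_1 \ge 0$, $n_k > 0$, and suppose $|n_k S^{(k)}_{ij}| \le \lambda_1$ for a fixed off-diagonal pair $(i,j)$, $i \ne j$, and all $k = 1, \dots, K$. Then there exist $\Gamma_{k} \in [-1,1]$ and fused-penalty subgradient values $\Upsilon_{k,k'} \in [-1,1]$ (for $k < k'$, with the convention $\Upsilon_{k',k} = -\Upsilon_{k,k'}$) such that $-n_k S^{(k)}_{ij} - \lambda_1 \Gamma_k - \lambda_2 \sum_{k' \ne k} \Upsilon_{k,k'} = 0$ for every $k$; in particular one may take all $\Upsilon_{k,k'} = 0$ and $\Gamma_k = -n_k S^{(k)}_{ij}/\lambda_1$ (or $\Gamma_k = 0$ if $\lambda_1 = 0$, since then $S^{(k)}_{ij} = 0$). -/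
open Finset

/-- Sufficient condition in Theorem 2 for `K > 2` classes: the KKT stationarity
conditions for a zero off-diagonal entry are satisfiable when
`|n_k S^(k)_ij| ≤ lam1` for all `k`. -/
theorem stmt_10 (K : ℕ) (hK : 2 ≤ K) (lam1 lam2 : ℝ)
    (hlam1 : 0 ≤ lam1) (hlam2 : 0 ≤ lam2)
    (n S : Fin K → ℝ) (hn : ∀ k, 0 < n k)
    (hcond : ∀ k, |n k * S k| ≤ lam1) :
    ∃ (Γ : Fin K → ℝ) (Υ : Fin K → Fin K → ℝ),
      (∀ k, Γ k ∈ Set.Icc (-1 : ℝ) 1) ∧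
      (∀ k k', Υ k k' ∈ Set.Icc (-1 : ℝ) 1) ∧
      (∀ k k', Υ k' k = -Υ k k') ∧
      (∀ k, -(n k * S k) - lam1 * Γ k -
        lam2 * ∑ k' ∈ Finset.univ.erase k, Υ k k' = 0) := by
  by_cases h0 : lam1 = 0
  · refine ⟨fun _ => 0, fun _ _ => 0, ?_, ?_, ?_, ?_⟩
    · intro k; constructor <;> norm_num
    · intro k k'; constructor <;> norm_num
    · intro k k'; ring
    · intro k
      have h := hcond k
      rw [h0] at h
      have : n k * S k = 0 := abs_nonpos_iff.mp h
      simp [this, h0]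
  · have hpos : 0 < lam1 := lt_of_le_of_ne hlam1 (Ne.symm h0)
    refine ⟨fun k => -(n k * S k) / lam1, fun _ _ => 0, ?_, ?_, ?_, ?_⟩
    · intro k
      have h := hcond k
      rw [abs_le] at h
      constructor
      · rw [le_div_iff₀ hpos]; linarith [h.2]
      · rw [div_le_iff₀ hpos]; linarith [h.1]
    · intro k k'; constructor <;> norm_num
    · intro k k'; ring
    · intro k
      have : lam1 * (-(n k * S k) / lam1) = -(n k * S k) := by
        field_simp
      simp [this]
end

section
/- Let $\rho > 0$, $\lambda_2 \ge 0$, and $A_1, A_2 \in \mathbb{R}$ with $|A_1 - A_2| \le 2\lambda_2/\rho$. Then for all $(z_1, z_2) \in \mathbb{R}^2$, $\frac{\rho}{2}\big((z_1-A_1)^2 + (z_2-A_2)^2\big) + \lambda_2|z_1 - z_2| \ge \frac{\rho}{2}\Big(\big(\tfrac{A_1+A_2}{2}-A_1\big)^2 + \big(\tfrac{A_1+A_2}{2}-A_2\big)^2\Big) = \frac{\rho}{4}(A_1 - A_2)^2$, i.e., the common value $z_1 = z_2 = (A_1+A_2)/2$ is optimal. -/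
/-- Fusion regime of the two-class fused lasso signal approximator: when
`|A1 - A2| ≤ 2 lam2 / ρ`, the averaged solution is optimal. -/
theorem stmt_15 (ρ lam2 A1 A2 : ℝ) (hρ : 0 < ρ) (hlam2 : 0 ≤ lam2)
    (hclose : |A1 - A2| ≤ 2 * lam2 / ρ) :
    (∀ z1 z2 : ℝ,
      ρ / 2 * (((A1 + A2) / 2 - A1) ^ 2 + ((A1 + A2) / 2 - A2) ^ 2) ≤
      ρ / 2 * ((z1 - A1) ^ 2 + (z2 - A2) ^ 2) + lam2 * |z1 - z2|) ∧
    ρ / 2 * (((A1 + A2) / 2 - A1) ^ 2 + ((A1 + A2) / 2 - A2) ^ 2) =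
      ρ / 4 * (A1 - A2) ^ 2 := by
  constructor
  · intro z1 z2
    have hρa : ρ * |A1 - A2| ≤ 2 * lam2 := by
      have := (le_div_iff₀ hρ).mp hclose
      nlinarith
    have h1 : ρ * ((A1 - A2) * (z1 - z2)) ≤ ρ * |A1 - A2| * |z1 - z2| := by
      have := mul_le_mul_of_nonneg_left
        (le_trans (le_abs_self _) (abs_mul (A1 - A2) (z1 - z2)).le) hρ.le
      linarith
    have h2 : ρ * |A1 - A2| * |z1 - z2| ≤ 2 * lam2 * |z1 - z2| := by
      exact mul_le_mul_of_nonneg_right hρa (abs_nonneg _)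
    nlinarith [sq_nonneg (z1 + z2 - A1 - A2), sq_nonneg (z1 - z2), abs_nonneg (z1 - z2)]
  · ring
end

section
/- Let $\lambda_1 \ge 0$, $\lambda_2 \ge 0$, $K \ge 1$, and let $s \in \mathbb{R}^K$. The zero vector minimizes $f(z) = \sum_{k=1}^K s_k z_k + \lambda_1 \sum_{k=1}^K |z_k| + \lambda_2 \sqrt{\sum_{k=1}^K z_k^2}$ over $z \in \mathbb{R}^K$ (equivalently, $f(z) \ge 0$ for all $z$) if and only if $\sqrt{\sum_{k=1}^K \big((|s_k| - \lambda_1)_+\big)^2} \le \lambda_2$. -/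
open Finset

/-- KKT zero-block condition for the group graphical lasso (Theorem 3):
zero minimizes the linearized objective plus penalty iff the screening
condition holds. -/
theorem stmt_17 (K : ℕ) (hK : 1 ≤ K) (lam1 lam2 : ℝ)
    (hlam1 : 0 ≤ lam1) (hlam2 : 0 ≤ lam2) (s : Fin K → ℝ) :
    (∀ z : Fin K → ℝ,
      0 ≤ ∑ k, s k * z k + lam1 * ∑ k, |z k| +
        lam2 * Real.sqrt (∑ k, (z k) ^ 2)) ↔
    Real.sqrt (∑ k, (max (|s k| - lam1) 0) ^ 2) ≤ lam2 := by
  set t : Fin K → ℝ := fun k => max (|s k| - lam1) 0 with ht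
  have htnn : ∀ k, 0 ≤ t k := fun k => le_max_right _ _
  have hTnn : (0:ℝ) ≤ ∑ k, (t k)^2 := Finset.sum_nonneg fun k _ => sq_nonneg _
  set A : ℝ := Real.sqrt (∑ k, (t k)^2) with hA
  have hAnn : 0 ≤ A := Real.sqrt_nonneg _
  have hA2 : A^2 = ∑ k, (t k)^2 := Real.sq_sqrt hTnn
  constructor
  · intro h
    have hz := h (fun k => if 0 ≤ s k then -(t k) else t k)
    have h1 : ∀ k, s k * (if 0 ≤ s k then -(t k) else t k) = -(|s k| * t k) := by
      intro k; by_cases hs : 0 ≤ s k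
      · simp only [hs, if_true, abs_of_nonneg hs]; ring
      · simp only [hs, if_false, abs_of_neg (lt_of_not_ge hs)]; ring
    have h2 : ∀ k, |if 0 ≤ s k then -(t k) else t k| = t k := by
      intro k; by_cases hs : 0 ≤ s k <;> simp [hs, abs_of_nonneg (htnn k)]
    have h3 : ∀ k, (if 0 ≤ s k then -(t k) else t k)^2 = (t k)^2 := by
      intro k; by_cases hs : 0 ≤ s k <;> simp [hs]
    simp only [h1, h2, h3] at hz
    have h4 : ∀ k, -(|s k| * t k) + lam1 * t k = -((t k)^2) := by
      intro k
      rcases le_or_gt (|s k| - lam1) 0 with hle | hlt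
      · have : t k = 0 := max_eq_right hle
        simp [this]
      · have : t k = |s k| - lam1 := max_eq_left hlt.le
        rw [this]; ring
    have h5 : ∑ k, -(|s k| * t k) + lam1 * ∑ k, t k = -(A^2) := by
      rw [hA2, Finset.mul_sum, ← Finset.sum_add_distrib, ← Finset.sum_neg_distrib]
      exact Finset.sum_congr rfl fun k _ => h4 k
    have hz' : 0 ≤ -(A^2) + lam2 * A := by linarith [hz, h5]
    rcases eq_or_lt_of_le hAnn with hA0 | hA0
    · rw [← hA0]; exact hlam2
    · nlinarith
  · intro h z
    have hZnn : (0:ℝ) ≤ ∑ k, (z k)^2 := Finset.sum_nonneg fun k _ => sq_nonneg _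
    set B : ℝ := Real.sqrt (∑ k, (z k)^2) with hB
    have hBnn : 0 ≤ B := Real.sqrt_nonneg _
    have hcs : ∑ k, t k * |z k| ≤ A * B := by
      have h1 : (∑ k, t k * |z k|)^2 ≤ (∑ k, (t k)^2) * ∑ k, (|z k|)^2 :=
        Finset.sum_mul_sq_le_sq_mul_sq _ _ _
      have h2 : ∑ k, (|z k|)^2 = ∑ k, (z k)^2 := by
        exact Finset.sum_congr rfl fun k _ => sq_abs _
      have h3 : (0:ℝ) ≤ ∑ k, t k * |z k| :=
        Finset.sum_nonneg fun k _ => mul_nonneg (htnn k) (abs_nonneg _)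
      have h4 : (∑ k, t k * |z k|)^2 ≤ (A*B)^2 := by
        rw [mul_pow, hA2, hB, Real.sq_sqrt hZnn]
        rw [h2] at h1; exact h1
      nlinarith [mul_nonneg hAnn hBnn]
    have hlb : -(∑ k, t k * |z k|) ≤ ∑ k, s k * z k + lam1 * ∑ k, |z k| := by
      rw [Finset.mul_sum, ← Finset.sum_add_distrib, ← Finset.sum_neg_distrib]
      refine Finset.sum_le_sum fun k _ => ?_
      have h1 : -(|s k| * |z k|) ≤ s k * z k := by
        rw [← abs_mul]; exact neg_abs_le _
      have h2 : |s k| ≤ lam1 + t k := by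
        have := le_max_left (|s k| - lam1) 0; linarith [this]
      nlinarith [abs_nonneg (z k)]
    have hfin : lam2 * B ≥ A * B := mul_le_mul_of_nonneg_right h hBnn
    linarith [hcs, hlb, hfin]
end

section
/- Let $\lambda_1 \ge 0$, $\lambda_2 \ge 0$, and $s_1, s_2 \in \mathbb{R}$. The origin $(0,0)$ minimizes $f(z_1, z_2) = s_1 z_1 + s_2 z_2 + \lambda_1(|z_1| + |z_2|) + \lambda_2 |z_1 - z_2|$ over $\mathbb{R}^2$ if and only if $|s_1| \le \lambda_1 + \lambda_2$, $|s_2| \le \lambda_1 + \lambda_2$, and $|s_1 + s_2| \le 2\lambda_1$. -/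
/-- KKT zero-entry condition for the two-class fused graphical lasso
(Theorem 2 with K = 2), in scalar form. -/
theorem stmt_18 (lam1 lam2 s1 s2 : ℝ) (hlam1 : 0 ≤ lam1) (hlam2 : 0 ≤ lam2) :
    (∀ z1 z2 : ℝ,
      0 ≤ s1 * z1 + s2 * z2 + lam1 * (|z1| + |z2|) + lam2 * |z1 - z2|) ↔
    (|s1| ≤ lam1 + lam2 ∧ |s2| ≤ lam1 + lam2 ∧ |s1 + s2| ≤ 2 * lam1) := by
  constructor
  · intro h
    have h10 := h 1 0
    have h20 := h (-1) 0
    have h01 := h 0 1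
    have h02 := h 0 (-1)
    have h11 := h 1 1
    have h22 := h (-1) (-1)
    norm_num [abs_of_nonneg, abs_of_nonpos] at h10 h20 h01 h02 h11 h22
    refine ⟨abs_le.mpr ⟨by linarith, by linarith⟩,
      abs_le.mpr ⟨by linarith, by linarith⟩,
      abs_le.mpr ⟨by linarith, by linarith⟩⟩
  · rintro ⟨h1, h2, h3⟩
    intro z1 z2
    obtain ⟨h1a, h1b⟩ := abs_le.mp h1
    obtain ⟨h2a, h2b⟩ := abs_le.mp h2
    obtain ⟨h3a, h3b⟩ := abs_le.mp h3
    rcases le_total 0 z1 with hz1 | hz1 <;>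
    rcases le_total 0 z2 with hz2 | hz2 <;>
    rcases le_total z2 z1 with hz | hz <;>
    simp only [abs_of_nonneg, abs_of_nonpos, sub_nonneg.mpr, sub_nonpos.mpr, hz1, hz2, hz,
      abs_of_nonneg (sub_nonneg.mpr hz), abs_of_nonpos (sub_nonpos.mpr hz)] <;>
    nlinarith [h1a, h1b, h2a, h2b, h3a, h3b, hz1, hz2, hz, hlam1, hlam2]
end
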